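/- arXiv:1510.08739 — 5 statements merged into one kernel-verified Lean document; each statement's English description precedes it below -/
import Mathlib

section
/- For every ε > 0 and every set A ⊆ 𝔽 ⁿ (𝔽 a finite field of prime order p), there exists a subspace V ≤ 𝔽ⁿ with codim V ≪ ε^{-1} (codimension bounded by C·ε^{-1} for an absolute constant C) and an element x ∈ 𝔽ⁿ such that A is ε-uniform on the coset x + V, meaning sup_{r ∉ V^⊥} |(1_A μ_{x+V})^∧(r)| ≤ ε. -/
/-!
Density increment. If `A` is not `ε`-uniform on `x + V`, witnessed by a frequency `r` that is
non-constant on `V`, split `x + V` into the `p` cosets of `W = V ∩ r^⊥`. The Fourier coefficient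
is `p⁻¹ ∑ₜ e(t) δₜ` up to a unimodular factor, where `δₜ` is the density of `A` on the `t`-th
coset; since `∑ₜ e(t) = 0` it is bounded by the mean absolute deviation of the `δₜ`, and as the
deviations sum to zero some coset has density at least `δ + ε / 2`. Densities stay in `[0, 1]`,
so after fewer than `2 / ε + 1` steps, each costing one dimension, the coset is `ε`-uniform.
-/

open scoped Classical
open Finset
noncomputable section

/-- Dot product on `𝔽_pⁿ`. -/
def dotp {p n : ℕ} (r x : Fin n → ZMod p) : ZMod p := ∑ i, r i * x i

/-- The additive character `t ↦ e^{-2πit/p}` of `𝔽_p`. -/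
def chip (p : ℕ) (t : ZMod p) : ℂ :=
  Complex.exp (-(2 * Real.pi * Complex.I) * (t.val : ℂ) / (p : ℂ))

/-- `(1_A μ_{x+V})^∧(r) = |V|⁻¹ ∑_{v ∈ V} 1_A(x+v) e^{-2πi r·(x+v)/p}`. -/
def fcosetp {p n : ℕ} [NeZero p] (A : Set (Fin n → ZMod p)) (x : Fin n → ZMod p)
    (V : Submodule (ZMod p) (Fin n → ZMod p)) (r : Fin n → ZMod p) : ℂ :=
  (∑ v : V, if x + (v : Fin n → ZMod p) ∈ A then
      chip p (dotp r (x + (v : Fin n → ZMod p))) else 0) / (Fintype.card V)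

open Matrix Module

lemma exists_le_of_sum_eq_zero_of_le_sum_abs {ι : Type*} [Fintype ι] [Nonempty ι]
    {g : ι → ℝ} {c : ℝ} (hc : 0 < c) (hg : ∑ i, g i = 0) (h : c ≤ ∑ i, |g i|) :
    ∃ i, c / (2 * Fintype.card ι) ≤ g i := by
  obtain ⟨i, -, hi⟩ : ∃ i ∈ univ, c / Fintype.card ι ≤ |g i| + g i := by
    refine exists_le_of_sum_le univ_nonempty ?_
    simpa [sum_add_distrib, hg, card_univ, mul_div_cancel₀] using h
  refine ⟨i, ?_⟩
  have hc' : 0 < c / Fintype.card ι := by positivity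
  rcases le_total (g i) 0 with hneg | hnonneg
  · rw [abs_of_nonpos hneg, neg_add_cancel] at hi
    linarith
  · rw [abs_of_nonneg hnonneg] at hi
    rw [mul_comm, ← div_div]
    linarith

lemma AddChar.norm_sum_mul_le_sum_abs_sub {G : Type*} [AddGroup G] [Fintype G]
    {ψ : AddChar G ℂ} (hψ : ψ ≠ 1) (d : G → ℝ) (δ : ℝ) :
    ‖∑ t, ψ t * d t‖ ≤ ∑ t, |d t - δ| := by
  have hcentre : ∑ t, ψ t * d t = ∑ t, ψ t * ↑(d t - δ) := by
    simp [mul_sub, sum_sub_distrib, ← sum_mul, AddChar.sum_eq_zero_of_ne_one hψ]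
  rw [hcentre]
  refine (norm_sum_le _ _).trans (sum_le_sum fun t _ => ?_)
  rw [norm_mul, ψ.norm_apply, one_mul, Complex.norm_real, Real.norm_eq_abs]

namespace Submodule

variable {R E : Type*} [Ring R] [AddCommGroup E] [Module R E]

def prodInfKerEquiv (V : Submodule R E) (φ : E →ₗ[R] R) {v₀ : E} (hv₀ : v₀ ∈ V)
    (hφv₀ : φ v₀ = 1) : R × ↥(V ⊓ LinearMap.ker φ) ≃ V where
  toFun z := ⟨z.1 • v₀ + z.2, V.add_mem (V.smul_mem z.1 hv₀) z.2.2.1⟩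
  invFun v := (φ v, ⟨v - φ v • v₀, V.sub_mem v.2 (V.smul_mem _ hv₀), by simp [hφv₀]⟩)
  left_inv := by
    rintro ⟨t, w, -, hw⟩
    have hφw : φ w = 0 := hw
    ext <;> simp [hφv₀, hφw]
  right_inv v := by simp

lemma sum_eq_sum_sum_inf_ker [Fintype R] [Fintype E] {M : Type*} [AddCommMonoid M]
    (V : Submodule R E) (φ : E →ₗ[R] R) {v₀ : E} (hv₀ : v₀ ∈ V) (hφv₀ : φ v₀ = 1) (F : E → M) :
    ∑ v : V, F v = ∑ t : R, ∑ w : ↥(V ⊓ LinearMap.ker φ), F (t • v₀ + w) := by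
  rw [← (prodInfKerEquiv V φ hv₀ hφv₀).sum_comp, Fintype.sum_prod_type]
  rfl

lemma card_eq_card_mul_card_inf_ker [Fintype R] [Fintype E]
    (V : Submodule R E) (φ : E →ₗ[R] R) {v₀ : E} (hv₀ : v₀ ∈ V) (hφv₀ : φ v₀ = 1) :
    Fintype.card V = Fintype.card R * Fintype.card ↥(V ⊓ LinearMap.ker φ) := by
  rw [Fintype.card_congr (prodInfKerEquiv V φ hv₀ hφv₀).symm, Fintype.card_prod]

lemma finrank_inf_ker_add_one {K E : Type*} [Field K] [AddCommGroup E] [Module K E]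
    (V : Submodule K E) [FiniteDimensional K V] {φ : Dual K E} (hφ : ∃ v ∈ V, φ v ≠ 0) :
    finrank K ↥(V ⊓ LinearMap.ker φ) + 1 = finrank K V := by
  have hne : φ.domRestrict V ≠ 0 := by
    obtain ⟨v, hv, hφv⟩ := hφ
    exact fun h => hφv (by simpa using LinearMap.congr_fun h ⟨v, hv⟩)
  rw [← Module.Dual.finrank_ker_add_one_of_ne_zero hne, LinearMap.ker_domRestrict,
    ← map_comap_subtype, finrank_map_subtype_eq]

end Submodule

section CosetDensity

variable {R E : Type*} [Ring R] [AddCommGroup E] [Module R E] [Fintype E]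

def cosetDensity (A : Set E) (x : E) (V : Submodule R E) : ℝ :=
  (∑ v : V, if x + (v : E) ∈ A then (1 : ℝ) else 0) / Fintype.card V

lemma cosetDensity_nonneg (A : Set E) (x : E) (V : Submodule R E) : 0 ≤ cosetDensity A x V :=
  div_nonneg (sum_nonneg fun _ _ => by split_ifs <;> norm_num) (Nat.cast_nonneg _)

lemma cosetDensity_le_one (A : Set E) (x : E) (V : Submodule R E) : cosetDensity A x V ≤ 1 := by
  refine div_le_one_of_le₀ ?_ (Nat.cast_nonneg _)
  calc (∑ v : V, if x + (v : E) ∈ A then (1 : ℝ) else 0) ≤ ∑ _v : V, (1 : ℝ) :=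
        sum_le_sum fun _ _ => by split_ifs <;> norm_num
    _ = Fintype.card V := by simp

lemma sum_cosetDensity_inf_ker [Fintype R] (A : Set E) (x : E) (V : Submodule R E)
    (φ : E →ₗ[R] R) {v₀ : E} (hv₀ : v₀ ∈ V) (hφv₀ : φ v₀ = 1) :
    ∑ t : R, cosetDensity A (x + t • v₀) (V ⊓ LinearMap.ker φ) =
      Fintype.card R * cosetDensity A x V := by
  simp only [cosetDensity, ← sum_div, add_assoc]
  rw [V.sum_eq_sum_sum_inf_ker φ hv₀ hφv₀ (fun y => if x + y ∈ A then (1 : ℝ) else 0),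
    V.card_eq_card_mul_card_inf_ker φ hv₀ hφv₀]
  have : (0 : ℝ) < Fintype.card ↥(V ⊓ LinearMap.ker φ) := by exact_mod_cast Fintype.card_pos
  push_cast
  field_simp

end CosetDensity

section Fourier

def chipAddChar (p : ℕ) [NeZero p] : AddChar (ZMod p) ℂ := ZMod.stdAddChar.mulShift (-1)

lemma coe_chipAddChar (p : ℕ) [NeZero p] : ⇑(chipAddChar p) = chip p := by
  ext t
  have : -t = ((-t.val : ℤ) : ZMod p) := by simp
  rw [chipAddChar, AddChar.mulShift_apply, neg_one_mul, this, ZMod.stdAddChar_coe, chip]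
  push_cast
  ring_nf

lemma chipAddChar_ne_one (p : ℕ) [Fact p.Prime] : chipAddChar p ≠ 1 :=
  (ZMod.isPrimitive_stdAddChar p) (neg_ne_zero.mpr one_ne_zero)

variable {p n : ℕ}

lemma chip_add [NeZero p] (a b : ZMod p) : chip p (a + b) = chip p a * chip p b := by
  simp only [← coe_chipAddChar, AddChar.map_add_eq_mul]

lemma norm_chip [NeZero p] (t : ZMod p) : ‖chip p t‖ = 1 := by
  rw [← coe_chipAddChar, AddChar.norm_apply]

lemma norm_fcosetp_le_one [NeZero p] (A : Set (Fin n → ZMod p)) (x : Fin n → ZMod p)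
    (V : Submodule (ZMod p) (Fin n → ZMod p)) (r : Fin n → ZMod p) :
    ‖fcosetp A x V r‖ ≤ 1 := by
  rw [fcosetp, norm_div, Complex.norm_natCast]
  refine div_le_one_of_le₀ ((norm_sum_le _ _).trans ?_) (Nat.cast_nonneg _)
  calc ∑ v : V, ‖if x + (v : Fin n → ZMod p) ∈ A then chip p (dotp r (x + v)) else 0‖
      ≤ ∑ _v : V, (1 : ℝ) := sum_le_sum fun v _ => by split_ifs <;> simp [norm_chip]
    _ = Fintype.card V := by simp

def dotpDual (r : Fin n → ZMod p) : Dual (ZMod p) (Fin n → ZMod p) :=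
  dotProductBilin (ZMod p) (ZMod p) r

lemma dotpDual_apply (r x : Fin n → ZMod p) : dotpDual r x = dotp r x := rfl

lemma fcosetp_eq_sum_chip_mul_cosetDensity [NeZero p] (A : Set (Fin n → ZMod p))
    (x : Fin n → ZMod p) (V : Submodule (ZMod p) (Fin n → ZMod p)) (r : Fin n → ZMod p)
    {v₀ : Fin n → ZMod p} (hv₀ : v₀ ∈ V) (hrv₀ : dotp r v₀ = 1) :
    fcosetp A x V r = chip p (dotp r x) *
      (∑ t, chip p t * cosetDensity A (x + t • v₀) (V ⊓ LinearMap.ker (dotpDual r))) / p := by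
  set W := V ⊓ LinearMap.ker (dotpDual r)
  have hfiber (t : ZMod p) (w : W) : dotp r (x + (t • v₀ + w)) = dotp r x + t := by
    have hw : dotpDual r w = 0 := w.2.2
    simp only [← dotpDual_apply, map_add, map_smul] at hrv₀ ⊢
    rw [hrv₀, hw, smul_eq_mul, mul_one, add_zero]
  rw [fcosetp, V.sum_eq_sum_sum_inf_ker (dotpDual r) hv₀ hrv₀
      (fun y => if x + y ∈ A then chip p (dotp r (x + y)) else 0),
    V.card_eq_card_mul_card_inf_ker (dotpDual r) hv₀ hrv₀, ZMod.card]
  simp only [cosetDensity, hfiber, chip_add, add_assoc]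
  push_cast
  simp only [mul_sum, sum_div]
  refine sum_congr rfl fun t _ => sum_congr rfl fun w _ => ?_
  split_ifs <;> push_cast <;> ring

end Fourier

section Increment

variable {p n : ℕ}

def IsUniformOn [NeZero p] (ε : ℝ) (A : Set (Fin n → ZMod p)) (x : Fin n → ZMod p)
    (V : Submodule (ZMod p) (Fin n → ZMod p)) : Prop :=
  ∀ r : Fin n → ZMod p, (∃ v ∈ V, dotp r v ≠ 0) → ‖fcosetp A x V r‖ ≤ ε

variable [Fact p.Prime]

lemma exists_cosetDensity_add_half_le {A : Set (Fin n → ZMod p)} {x r : Fin n → ZMod p}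
    {V : Submodule (ZMod p) (Fin n → ZMod p)} (hr : ∃ v ∈ V, dotp r v ≠ 0) {ε : ℝ}
    (hε : 0 < ε) (hfourier : ε ≤ ‖fcosetp A x V r‖) :
    ∃ (W : Submodule (ZMod p) (Fin n → ZMod p)) (y : Fin n → ZMod p),
      finrank (ZMod p) V ≤ finrank (ZMod p) W + 1 ∧
      cosetDensity A x V + ε / 2 ≤ cosetDensity A y W := by
  obtain ⟨v₁, hv₁, hrv₁⟩ := hr
  set v₀ := (dotp r v₁)⁻¹ • v₁
  have hv₀ : v₀ ∈ V := V.smul_mem _ hv₁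
  have hrv₀ : dotp r v₀ = 1 := by
    rw [← dotpDual_apply, map_smul, dotpDual_apply, smul_eq_mul, inv_mul_cancel₀ hrv₁]
  set W := V ⊓ LinearMap.ker (dotpDual r)
  set d : ZMod p → ℝ := fun t => cosetDensity A (x + t • v₀) W
  have hmean : ∑ t, (d t - cosetDensity A x V) = 0 := by
    rw [sum_sub_distrib, sum_cosetDensity_inf_ker A x V (dotpDual r) hv₀ hrv₀]
    simp
  have hp : (0 : ℝ) < p := by exact_mod_cast (Fact.out : p.Prime).pos
  have hdeviation : ε * p ≤ ∑ t, |d t - cosetDensity A x V| :=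
    calc ε * p ≤ ‖fcosetp A x V r‖ * p := by gcongr
      _ = ‖∑ t, chipAddChar p t * d t‖ := by
        rw [fcosetp_eq_sum_chip_mul_cosetDensity A x V r hv₀ hrv₀, norm_div, norm_mul, norm_chip,
          coe_chipAddChar, Complex.norm_natCast, one_mul, div_mul_cancel₀ _ hp.ne']
      _ ≤ _ := AddChar.norm_sum_mul_le_sum_abs_sub (chipAddChar_ne_one p) d _
  obtain ⟨t, ht⟩ := exists_le_of_sum_eq_zero_of_le_sum_abs (by positivity) hmean hdeviation
  refine ⟨W, x + t • v₀, (Submodule.finrank_inf_ker_add_one V ⟨v₁, hv₁, hrv₁⟩).ge, ?_⟩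
  rw [ZMod.card, mul_div_mul_right _ _ hp.ne'] at ht
  linarith

lemma exists_isUniformOn_or_le_cosetDensity (A : Set (Fin n → ZMod p)) {ε : ℝ} (hε : 0 < ε)
    (k : ℕ) :
    ∃ (V : Submodule (ZMod p) (Fin n → ZMod p)) (x : Fin n → ZMod p),
      n ≤ finrank (ZMod p) V + k ∧ (IsUniformOn ε A x V ∨ k * (ε / 2) ≤ cosetDensity A x V) := by
  induction k with
  | zero => exact ⟨⊤, 0, by simp, Or.inr (by simpa using cosetDensity_nonneg A 0 ⊤)⟩
  | succ k ih =>
    obtain ⟨V, x, hcodim, huniform | hdense⟩ := ih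
    · exact ⟨V, x, by omega, Or.inl huniform⟩
    by_cases huniform : IsUniformOn ε A x V
    · exact ⟨V, x, by omega, Or.inl huniform⟩
    obtain ⟨r, hr, hfourier⟩ : ∃ r, (∃ v ∈ V, dotp r v ≠ 0) ∧ ε < ‖fcosetp A x V r‖ := by
      simpa only [IsUniformOn, not_forall, not_le, exists_prop] using huniform
    obtain ⟨W, y, hrank, hincrement⟩ := exists_cosetDensity_add_half_le hr hε hfourier.le
    exact ⟨W, y, by omega, Or.inr (by push_cast; linarith)⟩

end Increment

/-- for every `ε > 0` and `A ⊆ 𝔽_pⁿ` there is a subspace `V` of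
codimension `≪ ε⁻¹` and a coset `x + V` on which `A` is `ε`-uniform. -/
theorem uniform_on_some_coset :
    ∃ C : ℝ, 0 < C ∧
      ∀ (p : ℕ) [Fact p.Prime] (ε : ℝ), 0 < ε →
        ∀ (n : ℕ) (A : Set (Fin n → ZMod p)),
          ∃ (V : Submodule (ZMod p) (Fin n → ZMod p)) (x : Fin n → ZMod p),
            ((n : ℝ) - Module.finrank (ZMod p) V ≤ C / ε) ∧
            ∀ r : Fin n → ZMod p, (∃ v ∈ V, dotp r v ≠ 0) →
              ‖fcosetp A x V r‖ ≤ ε := by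
  refine ⟨3, by norm_num, fun p _ ε hε n A => ?_⟩
  rcases le_or_gt 1 ε with hε1 | hε1
  · refine ⟨⊤, 0, ?_, fun r _ => (norm_fcosetp_le_one A 0 ⊤ r).trans hε1⟩
    rw [finrank_top, finrank_fin_fun, sub_self]
    positivity
  set k := ⌊2 / ε⌋₊ + 1
  obtain ⟨V, x, hcodim, huniform | hdense⟩ := exists_isUniformOn_or_le_cosetDensity A hε k
  · refine ⟨V, x, ?_, huniform⟩
    calc (n : ℝ) - finrank (ZMod p) V ≤ k := by
          rw [sub_le_iff_le_add']
          exact_mod_cast hcodim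
      _ ≤ 2 / ε + 1 := by simpa [k] using Nat.floor_le (by positivity : (0 : ℝ) ≤ 2 / ε)
      _ ≤ 3 / ε := by
          rw [div_add_one hε.ne']
          gcongr
          linarith
  · have hk : 1 < k * (ε / 2) := by
      have := Nat.lt_floor_add_one (2 / ε)
      rw [div_lt_iff₀ hε] at this
      push_cast [k]
      linarith
    exact absurd (hdense.trans (cosetDensity_le_one A x V)) hk.not_ge
end
end

section
/- (Graham–Rothschild finite unions theorem, vector space form) For all positive integers r and d there exists n₀(r,d) such that for all n ≥ n₀(r,d): for every r-colouring c : 𝔽₂ⁿ \ {0} → [r], there exist linearly independent x₁,…,x_d ∈ 𝔽₂ⁿ such that all nonempty subset sums ∑_{i∈I} x_i, ∅ ≠ I ⊆ [d], receive the same colour. -/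
/-!
Hindman's theorem, applied to the stream of unit vectors of `𝔽₂^ℕ`, gives for every finite
colouring of `𝔽₂^ℕ` vectors `x₁, …, x_d` whose nonempty subset sums are monochromatic and, being
nonempty sums of distinct unit vectors, nonzero; over `𝔽₂` nonzero subset sums mean linear
independence.
Compactness transfers this to `𝔽₂ᴺ` for one `N`: colour `v ∈ 𝔽₂^ℕ` by the limit, along a
nonprincipal ultrafilter, of the colours of its truncations under putative bad colourings of
every `𝔽₂ᴺ`. Extension by zero then passes from `N` to every `n ≥ N`.
-/

open Finset Filter

theorem Hindman.exists_sum_eq_of_mem_FS {M : Type*} [AddCommMonoid M] {a : Stream' M} {m : M}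
    (hm : m ∈ Hindman.FS a) : ∃ s : Finset ℕ, s.Nonempty ∧ ∑ i ∈ s, a.get i = m := by
  induction hm with
  | head' a => exact ⟨{0}, singleton_nonempty 0, sum_singleton _ _⟩
  | tail' a m _ ih =>
    obtain ⟨s, hs, rfl⟩ := ih
    exact ⟨s.map (addRightEmbedding 1), hs.map, sum_map _ _ _⟩
  | cons' a m _ ih =>
    obtain ⟨s, hs, rfl⟩ := ih
    refine ⟨insert 0 (s.map (addRightEmbedding 1)), insert_nonempty _ _, ?_⟩
    rw [sum_insert (by simp), sum_map]
    rfl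

theorem Finset.sum_pi_single_ne_zero {ι M : Type*} [DecidableEq ι] [AddCommMonoid M]
    {s : Finset ι} (hs : s.Nonempty) {a : M} (ha : a ≠ 0) : ∑ k ∈ s, Pi.single k a ≠ 0 := by
  obtain ⟨k, hk⟩ := hs
  intro h
  have := congrFun h k
  rw [sum_apply, sum_pi_single (f := fun _ => a)] at this
  simp [hk, ha] at this

theorem exists_monochromatic_nonzero_subset_sums {M κ : Type*} [AddCommMonoid M] [Nontrivial M]
    [Finite κ] (d : ℕ) (χ : (ℕ → M) → κ) :
    ∃ x : Fin d → ℕ → M, ∃ col : κ, ∀ I : Finset (Fin d), I.Nonempty →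
      ∑ i ∈ I, x i ≠ 0 ∧ χ (∑ i ∈ I, x i) = col := by
  obtain ⟨a, ha⟩ := exists_ne (0 : M)
  let e : Stream' (ℕ → M) := fun k => Pi.single k a
  obtain ⟨_, ⟨col, rfl⟩, b, hb⟩ := Hindman.FS_partition_regular e
    (Set.range fun col => {m | m ∈ Hindman.FS e ∧ χ m = col}) (Set.finite_range _)
    (fun m hm => ⟨_, ⟨χ m, rfl⟩, hm, rfl⟩)
  refine ⟨fun i => b.get i, col, fun I hI => ?_⟩
  have hsum : ∑ i ∈ I, b.get i ∈ Hindman.FS b := by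
    simpa using Hindman.FS.finsetSum b (I.map Fin.valEmbedding) hI.map
  obtain ⟨hmem, hcol⟩ := hb hsum
  obtain ⟨s, hs, hs_eq⟩ := Hindman.exists_sum_eq_of_mem_FS hmem
  exact ⟨hs_eq ▸ sum_pi_single_ne_zero hs ha, hcol⟩

theorem linearIndependent_zmod_two_of_sum_ne_zero {ι V : Type*} [AddCommGroup V]
    [Module (ZMod 2) V] {x : ι → V} (h : ∀ I : Finset ι, I.Nonempty → ∑ i ∈ I, x i ≠ 0) :
    LinearIndependent (ZMod 2) x := by
  classical
  refine linearIndependent_iff'.mpr fun s g hg i hi => ?_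
  by_contra hgi
  have hsupport : ∑ j ∈ s with g j ≠ 0, x j = 0 := by
    rw [sum_filter]
    refine (sum_congr rfl fun j _ => ?_).trans hg
    split_ifs with hj
    · rw [show g j = 1 from Fin.eq_one_of_ne_zero (g j) hj, one_smul]
    · rw [not_not.mp hj, zero_smul]
  exact h _ ⟨i, mem_filter.mpr ⟨hi, hgi⟩⟩ hsupport

theorem eventually_comp_val_ne_zero {M : Type*} [Zero M] {v : ℕ → M} (hv : v ≠ 0) :
    ∀ᶠ N in atTop, v ∘ (Fin.val : Fin N → ℕ) ≠ 0 := by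
  obtain ⟨k, hk⟩ := Function.ne_iff.mp hv
  filter_upwards [eventually_gt_atTop k] with N hN h
  exact hk (congrFun h ⟨k, hN⟩)

def SubsetSumsRamsey (K V : Type*) [Semiring K] [AddCommMonoid V] [Module K V] (r d : ℕ) : Prop :=
  ∀ c : V → Fin r, ∃ x : Fin d → V, LinearIndependent K x ∧
    ∃ col : Fin r, ∀ I : Finset (Fin d), I.Nonempty → c (∑ i ∈ I, x i) = col

namespace SubsetSumsRamsey

variable {K V W : Type*} [Ring K] [AddCommGroup V] [Module K V] [AddCommGroup W] [Module K W]
  {r d : ℕ}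

theorem of_injective (h : SubsetSumsRamsey K V r d) (E : V →ₗ[K] W)
    (hE : Function.Injective E) : SubsetSumsRamsey K W r d := by
  intro c
  obtain ⟨x, hx, col, hcol⟩ := h (c ∘ E)
  exact ⟨E ∘ x, hx.map' E (LinearMap.ker_eq_bot.mpr hE), col,
    fun I hI => by simpa [map_sum] using hcol I hI⟩

theorem fin_mono {N n : ℕ} (h : SubsetSumsRamsey K (Fin N → K) r d) (hNn : N ≤ n) :
    SubsetSumsRamsey K (Fin n → K) r d :=
  h.of_injective (Function.ExtendByZero.linearMap K (Fin.castLE hNn))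
    (Function.extend_injective (Fin.castLE_injective hNn) 0)

end SubsetSumsRamsey

theorem exists_subsetSumsRamsey_zmod_two (r d : ℕ) :
    ∃ N, SubsetSumsRamsey (ZMod 2) (Fin N → ZMod 2) r d := by
  by_contra! hbad
  simp only [SubsetSumsRamsey, not_forall] at hbad
  choose c hc using hbad
  let U : Ultrafilter ℕ := hyperfilter ℕ
  let restrict (N : ℕ) := LinearMap.funLeft (ZMod 2) (ZMod 2) (Fin.val : Fin N → ℕ)
  choose χ hχ using fun v : ℕ → ZMod 2 =>
    U.eventually_exists_iff (P := fun k N => c N (restrict N v) = k).mp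
      (Eventually.of_forall fun N => ⟨_, rfl⟩)
  obtain ⟨x, col, hx⟩ := exists_monochromatic_nonzero_subset_sums d χ
  have hgood : ∀ᶠ N in U, ∀ I : Finset (Fin d), I.Nonempty →
      restrict N (∑ i ∈ I, x i) ≠ 0 ∧ c N (restrict N (∑ i ∈ I, x i)) = col := by
    refine eventually_all.mpr fun I => ?_
    by_cases hI : I.Nonempty
    · have hne : ∀ᶠ N in U, restrict N (∑ i ∈ I, x i) ≠ 0 := hyperfilter_le_cofinite <| by
        rw [Nat.cofinite_eq_atTop]; exact eventually_comp_val_ne_zero (hx I hI).1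
      filter_upwards [hne, hχ (∑ i ∈ I, x i)] with N hN hcN
      exact fun _ => ⟨hN, hcN.trans (hx I hI).2⟩
    · exact Eventually.of_forall fun _ hI' => absurd hI' hI
  obtain ⟨N, hN⟩ := hgood.exists
  refine hc N ⟨restrict N ∘ x, ?_, col, fun I hI => ?_⟩
  · exact linearIndependent_zmod_two_of_sum_ne_zero fun I hI => by
      simpa [← map_sum] using (hN I hI).1
  · simpa [← map_sum] using (hN I hI).2

theorem graham_rothschild_subspaces_general (r d : ℕ) :
    ∃ n₀ : ℕ, ∀ n ≥ n₀, ∀ c : (Fin n → ZMod 2) → Fin r,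
      ∃ x : Fin d → (Fin n → ZMod 2),
        LinearIndependent (ZMod 2) x ∧
        ∃ col : Fin r, ∀ I : Finset (Fin d), I.Nonempty →
          c (∑ i ∈ I, x i) = col := by
  obtain ⟨N, hN⟩ := exists_subsetSumsRamsey_zmod_two r d
  exact ⟨N, fun n hn => hN.fin_mono hn⟩

/-- Graham–Rothschild finite unions theorem, vector space form:
for all `r, d ≥ 1` there is `n₀` such that for `n ≥ n₀`, any `r`-colouring of
`𝔽₂ⁿ \ {0}` admits linearly independent `x₁, …, x_d` all of whose nonempty
subset sums get the same colour. -/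
theorem graham_rothschild_subspaces (r d : ℕ) (hr : 1 ≤ r) (hd : 1 ≤ d) :
    ∃ n₀ : ℕ, ∀ n ≥ n₀, ∀ c : (Fin n → ZMod 2) → Fin r,
      ∃ x : Fin d → (Fin n → ZMod 2),
        LinearIndependent (ZMod 2) x ∧
        ∃ col : Fin r, ∀ I : Finset (Fin d), I.Nonempty →
          c (∑ i ∈ I, x i) = col :=
  graham_rothschild_subspaces_general r d
end

section
/- (Ramsey theorem for almost colourings) For all positive integers r, d there exist η(r,d) > 0 and n₀(r,d) such that for all n ≥ n₀(r,d) and all 0 ≤ η ≤ η(r,d): if c : X̃ → [r] is a colouring of a subset X̃ ⊆ 𝔽₂ⁿ with |𝔽₂ⁿ \ X̃| ≤ η·2ⁿ, then there exist linearly independent x₁,…,x_d ∈ 𝔽₂ⁿ such that every nonempty subset sum ∑_{i∈I} x_i lies in X̃ and all these subset sums receive the same colour. One may take η(r,d) = 2^{-m-1} where m = m(r,d) is admissible for the full-colouring (η = 0) case. -/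
/-!
By Hindman's theorem applied to the standard basis of `ℕ →₀ 𝔽₂`, every finite colouring of
`ℕ →₀ 𝔽₂` has `x₁, …, x_d` whose nonempty subset sums are nonzero and monochromatic; pulling a
counterexample colouring of each `𝔽₂^m` back to `ℕ →₀ 𝔽₂` and taking the limit colouring along a
nonprincipal ultrafilter turns this into the finite unions theorem for `𝔽₂^m`, `m = m(r, d)`.

If at most `2^(n-m-1)` points of `𝔽₂ⁿ` are uncoloured, vectors `v₁, …, v_m` whose nonzero
combinations are all coloured and nonzero can be chosen greedily: the next vector only has to
avoid the translates of the uncoloured points and `0` by the cube spanned so far, at most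
`2^(k-1) · (2^(n-m-1) + 1) < 2ⁿ` points. The finite unions theorem, applied to the colouring
`a ↦ c (∑ aᵢ vᵢ)` of `𝔽₂^m`, then gives the result.
-/

open Finset

theorem ZMod.eq_zero_or_eq_one (z : ZMod 2) : z = 0 ∨ z = 1 := by
  revert z; decide

theorem linearIndependent_zmod_two_iff_sum_ne_zero {ι W : Type*} [Fintype ι] [AddCommGroup W]
    [Module (ZMod 2) W] (x : ι → W) :
    LinearIndependent (ZMod 2) x ↔ ∀ I : Finset ι, I.Nonempty → ∑ i ∈ I, x i ≠ 0 := by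
  classical
  have sum_eq (g : ι → ZMod 2) : ∑ i, g i • x i = ∑ i ∈ univ.filter (g · ≠ 0), x i := by
    rw [sum_filter]
    refine sum_congr rfl fun i _ => ?_
    rcases (g i).eq_zero_or_eq_one with hg | hg <;> simp [hg]
  rw [Fintype.linearIndependent_iff]
  constructor
  · rintro h I ⟨i, hi⟩ hI
    have := h (fun j => if j ∈ I then 1 else 0) (by simpa [sum_eq] using hI) i
    simp [hi] at this
  · intro h g hg i
    by_contra hgi
    exact h _ ⟨i, by simpa using hgi⟩ (sum_eq g ▸ hg)

theorem Hindman.exists_finset_sum_eq_of_mem_FS {M : Type*} [AddCommMonoid M] {a : Stream' M}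
    {m : M} (h : m ∈ Hindman.FS a) : ∃ s : Finset ℕ, s.Nonempty ∧ ∑ i ∈ s, a.get i = m := by
  have sum_map_succ (a : Stream' M) (s : Finset ℕ) :
      ∑ i ∈ s.map (addRightEmbedding 1), a.get i = ∑ i ∈ s, a.tail.get i := by
    simp [Stream'.get_tail]
  induction h with
  | head' a => exact ⟨{0}, singleton_nonempty 0, sum_singleton _ _⟩
  | tail' a m _ ih =>
    obtain ⟨s, hs, rfl⟩ := ih
    exact ⟨_, hs.map, sum_map_succ a s⟩
  | cons' a m _ ih =>
    obtain ⟨s, -, rfl⟩ := ih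
    refine ⟨insert 0 (s.map (addRightEmbedding 1)), insert_nonempty _ _, ?_⟩
    rw [sum_insert (by simp), sum_map_succ]

theorem Finsupp.sum_single_one_ne_zero {R : Type*} [Semiring R] [Nontrivial R] {s : Finset ℕ}
    (hs : s.Nonempty) : ∑ i ∈ s, Finsupp.single i (1 : R) ≠ 0 := by
  obtain ⟨j, hj⟩ := hs
  refine fun h => one_ne_zero (α := R) ?_
  simpa [Finsupp.finsetSum_apply, Finsupp.single_apply, hj] using DFunLike.congr_fun h j

theorem exists_monochromatic_subset_sums_finsupp {κ : Type*} [Finite κ]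
    (C : (ℕ →₀ ZMod 2) → κ) (d : ℕ) :
    ∃ x : Fin d → ℕ →₀ ZMod 2, ∃ col : κ, ∀ I : Finset (Fin d), I.Nonempty →
      ∑ j ∈ I, x j ≠ 0 ∧ C (∑ j ∈ I, x j) = col := by
  let e : Stream' (ℕ →₀ ZMod 2) := fun i => Finsupp.single i 1
  obtain ⟨-, ⟨col, rfl⟩, b, hb⟩ := Hindman.FS_partition_regular e
    (Set.range fun col => {v | v ∈ Hindman.FS e ∧ C v = col}) (Set.finite_range _)
    fun v hv => Set.mem_sUnion.2 ⟨_, ⟨C v, rfl⟩, hv, rfl⟩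
  refine ⟨fun j => b.get j, col, fun I hI => ?_⟩
  obtain ⟨he, hC⟩ := hb (by simpa using Hindman.FS.finsetSum b _ (hI.map (f := Fin.valEmbedding)))
  obtain ⟨s, hs, hsum⟩ := Hindman.exists_finset_sum_eq_of_mem_FS he
  exact ⟨hsum ▸ Finsupp.sum_single_one_ne_zero hs, hC⟩

noncomputable def Finsupp.truncate (R : Type*) [Semiring R] (m : ℕ) : (ℕ →₀ R) →ₗ[R] Fin m → R :=
  LinearMap.funLeft R R Fin.val ∘ₗ Finsupp.lcoeFun

theorem Finsupp.eventually_truncate_ne_zero {R : Type*} [Semiring R] {v : ℕ →₀ R} (hv : v ≠ 0) :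
    ∀ᶠ m in Filter.cofinite, truncate R m v ≠ 0 := by
  obtain ⟨j, hj⟩ := Finsupp.ne_iff.1 hv
  rw [Nat.cofinite_eq_atTop, Filter.eventually_atTop]
  exact ⟨j + 1, fun m hm h => hj (congr_fun h ⟨j, hm⟩)⟩

theorem Ultrafilter.exists_eventually_eq {α κ : Type*} [Finite κ] (U : Ultrafilter α)
    (f : α → κ) : ∃ k, ∀ᶠ a in U, f a = k := by
  obtain ⟨k, hk⟩ := (U.map f).eq_pure_of_finite
  exact ⟨k, show f ⁻¹' {k} ∈ U from Ultrafilter.mem_map.1 (hk ▸ rfl)⟩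

theorem exists_monochromatic_subset_sums {κ : Type*} [Finite κ] (d : ℕ) :
    ∃ m, ∀ c : (Fin m → ZMod 2) → κ, ∃ y : Fin d → Fin m → ZMod 2,
      LinearIndependent (ZMod 2) y ∧
        ∃ col : κ, ∀ I : Finset (Fin d), I.Nonempty → c (∑ j ∈ I, y j) = col := by
  by_contra! h
  choose c hc using h
  let U := Filter.hyperfilter ℕ
  choose C hC using fun v => U.exists_eventually_eq fun m => c m (Finsupp.truncate _ m v)
  obtain ⟨x, col, hx⟩ := exists_monochromatic_subset_sums_finsupp C d
  have hgood : ∀ᶠ m in U, ∀ I : Finset (Fin d), I.Nonempty →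
      Finsupp.truncate _ m (∑ j ∈ I, x j) ≠ 0 ∧
        c m (Finsupp.truncate _ m (∑ j ∈ I, x j)) = col := by
    refine Filter.eventually_all.2 fun I => ?_
    by_cases hI : I.Nonempty
    · filter_upwards [Filter.hyperfilter_le_cofinite
          (Finsupp.eventually_truncate_ne_zero (hx I hI).1), hC (∑ j ∈ I, x j)]
        with m hne hcol _
      exact ⟨hne, hcol.trans (hx I hI).2⟩
    · exact Filter.Eventually.of_forall fun _ h => absurd h hI
  obtain ⟨m, hm⟩ := hgood.exists
  obtain ⟨I, hI, hne⟩ := hc m (fun j => Finsupp.truncate _ m (x j))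
    ((linearIndependent_zmod_two_iff_sum_ne_zero _).2 fun I hI => by
      rw [← map_sum]; exact (hm I hI).1) col
  exact hne (by rw [← map_sum]; exact (hm I hI).2)

open scoped Pointwise in
theorem exists_combinations_mem_of_card_compl_lt {V : Type*} [AddCommGroup V]
    [Module (ZMod 2) V] [Fintype V] [DecidableEq V] (G : Finset V) (m : ℕ)
    (hG : #Gᶜ * 2 ^ m < 2 * Fintype.card V) :
    ∃ v : Fin m → V, ∀ a : Fin m → ZMod 2, a ≠ 0 → ∑ i, a i • v i ∈ G := by
  induction m with
  | zero => exact ⟨Fin.elim0, fun a ha => absurd (Subsingleton.elim a 0) ha⟩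
  | succ k ih =>
    rw [pow_succ, ← mul_assoc] at hG
    obtain ⟨v, hv⟩ := ih (by omega)
    set cube := univ.image fun a : Fin k → ZMod 2 => ∑ i, a i • v i
    have hcube : #cube ≤ 2 ^ k := card_image_le.trans (by simp [ZMod.card])
    obtain ⟨u, hu⟩ : ∃ u, u ∉ Gᶜ - cube := by
      by_contra! h
      have := card_sub_le.trans (Nat.mul_le_mul_left #Gᶜ hcube)
      rw [eq_univ_of_forall h, card_univ] at this
      omega
    have hu' (w) (hw : w ∈ cube) : u + w ∈ G := by
      by_contra h
      exact hu (mem_sub.2 ⟨u + w, mem_compl.2 h, w, hw, add_sub_cancel_right u w⟩)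
    refine ⟨Fin.cons u v, Fin.consCases fun a₀ t ha => ?_⟩
    simp only [Fin.sum_univ_succ, Fin.cons_zero, Fin.cons_succ]
    rcases a₀.eq_zero_or_eq_one with h₀ | h₀
    · simpa [h₀] using hv t fun ht => ha (by rw [h₀, ht]; exact Matrix.cons_zero_zero)
    · simpa [h₀] using hu' _ (mem_image_of_mem _ (mem_univ t))

theorem card_compl_erase_mul_two_pow_lt {V : Type*} [Fintype V] [DecidableEq V] (X : Finset V)
    (a : V) {m : ℕ} (hm : 2 ^ m ≤ Fintype.card V)
    (hX : #(univ \ X) * 2 ^ (m + 1) ≤ Fintype.card V) :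
    #(X.erase a)ᶜ * 2 ^ m < 2 * Fintype.card V := by
  have hcompl : #(X.erase a)ᶜ ≤ #(univ \ X) + 1 := by
    rw [compl_erase, ← compl_eq_univ_sdiff]
    exact card_insert_le a Xᶜ
  rw [pow_succ] at hX
  nlinarith [Nat.mul_le_mul_right (2 ^ m) hcompl, Nat.one_le_two_pow (n := m)]

theorem almost_colouring_ramsey_general (r d : ℕ) :
    ∃ η : ℝ, 0 < η ∧ ∃ n₀ : ℕ, ∀ n ≥ n₀, ∀ η' : ℝ, 0 ≤ η' → η' ≤ η →
      ∀ (X : Finset (Fin n → ZMod 2)) (c : (Fin n → ZMod 2) → Fin r),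
        ((Finset.univ \ X).card : ℝ) ≤ η' * 2 ^ n →
        ∃ x : Fin d → (Fin n → ZMod 2),
          LinearIndependent (ZMod 2) x ∧
          ∃ col : Fin r, ∀ I : Finset (Fin d), I.Nonempty →
            (∑ i ∈ I, x i) ∈ X ∧ c (∑ i ∈ I, x i) = col := by
  obtain ⟨m, hm⟩ := exists_monochromatic_subset_sums (κ := Fin r) d
  refine ⟨1 / 2 ^ (m + 1), by positivity, m, fun n hn η' _ hη' X c hX => ?_⟩
  have hcard : Fintype.card (Fin n → ZMod 2) = 2 ^ n := by simp [ZMod.card]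
  have hX' : #(univ \ X) * 2 ^ (m + 1) ≤ Fintype.card (Fin n → ZMod 2) := by
    rw [hcard, ← Nat.cast_le (α := ℝ)]
    push_cast
    calc (#(univ \ X) : ℝ) * 2 ^ (m + 1) ≤ η' * 2 ^ n * 2 ^ (m + 1) := by gcongr
      _ ≤ 1 / 2 ^ (m + 1) * 2 ^ n * 2 ^ (m + 1) := by gcongr
      _ = 2 ^ n := by field_simp
  obtain ⟨v, hv⟩ := exists_combinations_mem_of_card_compl_lt (X.erase 0) m <|
    card_compl_erase_mul_two_pow_lt X 0 (by rw [hcard]; exact Nat.pow_le_pow_right two_pos hn) hX'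
  let φ := Fintype.linearCombination (ZMod 2) v
  obtain ⟨y, hy, col, hcol⟩ := hm (c ∘ φ)
  have hmem (I : Finset (Fin d)) (hI : I.Nonempty) : ∑ j ∈ I, φ (y j) ∈ X.erase 0 := by
    rw [← map_sum, Fintype.linearCombination_apply]
    exact hv _ ((linearIndependent_zmod_two_iff_sum_ne_zero y).1 hy I hI)
  refine ⟨φ ∘ y, (linearIndependent_zmod_two_iff_sum_ne_zero _).2 fun I hI =>
    (mem_erase.1 (hmem I hI)).1, col, fun I hI => ⟨(mem_erase.1 (hmem I hI)).2, ?_⟩⟩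
  rw [Function.comp_def, ← map_sum]
  exact hcol I hI

/-- Ramsey theorem for almost colourings: for all `r, d ≥ 1`
there are `η(r,d) > 0` and `n₀(r,d)` such that for `n ≥ n₀` and `0 ≤ η' ≤ η`,
any `r`-colouring of a subset `X̃ ⊆ 𝔽₂ⁿ` missing at most `η'·2ⁿ` points admits
linearly independent `x₁, …, x_d` all of whose nonempty subset sums lie in `X̃`
and get the same colour. -/
theorem almost_colouring_ramsey (r d : ℕ) (hr : 1 ≤ r) (hd : 1 ≤ d) :
    ∃ η : ℝ, 0 < η ∧ ∃ n₀ : ℕ, ∀ n ≥ n₀, ∀ η' : ℝ, 0 ≤ η' → η' ≤ η →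
      ∀ (X : Finset (Fin n → ZMod 2)) (c : (Fin n → ZMod 2) → Fin r),
        ((Finset.univ \ X).card : ℝ) ≤ η' * 2 ^ n →
        ∃ x : Fin d → (Fin n → ZMod 2),
          LinearIndependent (ZMod 2) x ∧
          ∃ col : Fin r, ∀ I : Finset (Fin d), I.Nonempty →
            (∑ i ∈ I, x i) ∈ X ∧ c (∑ i ∈ I, x i) = col :=
  almost_colouring_ramsey_general r d
end

section
/- Let m ≤ n be positive integers with n ≥ m + 3, and suppose Y ⊆ 𝔽₂ⁿ \ {0} satisfies |(𝔽₂ⁿ \ {0}) \ Y| ≤ 2^{-m}·|𝔽₂ⁿ \ {0}|. Then there exists an m-dimensional subspace V ≤ 𝔽₂ⁿ with V \ {0} ⊆ Y. -/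
/-!
The group of linear automorphisms of `𝔽₂ⁿ` acts transitively on the nonzero vectors. Fix an
`m`-dimensional subspace `W` and let `B` be the set of nonzero vectors outside `Y`. Averaged over
all automorphisms `g`, the number of nonzero vectors of `g W` lying in `B` is
`(2^m - 1) |B| / (2^n - 1) < 1`, so for some `g` it is zero and `g W` is the required subspace.
-/

open scoped Classical
open Finset MulAction

section Averaging

variable {G α : Type*} [Group G] [Fintype G] [MulAction G α] [DecidableEq α]

theorem MulAction.card_filter_smul_eq_eq_card_stabilizer {x w : α} (hw : w ∈ orbit G x) :
    #{g : G | g • x = w} = Nat.card (stabilizer G x) := by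
  obtain ⟨h, rfl⟩ := hw
  rw [Nat.card_eq_fintype_card, ← Fintype.card_coe]
  refine Fintype.card_congr (Equiv.subtypeEquiv (Equiv.mulLeft h⁻¹) fun g => ?_)
  simp [mul_smul, inv_smul_eq_iff]

theorem MulAction.card_filter_smul_mem_mul_ncard_orbit {x : α} {B : Finset α}
    (hB : ↑B ⊆ orbit G x) :
    #{g : G | g • x ∈ B} * (orbit G x).ncard = #B * Fintype.card G := by
  have hfib : #{g : G | g • x ∈ B} = ∑ w ∈ B, #{g : G | g • x = w} := by
    rw [card_eq_sum_card_fiberwise (f := (· • x)) (t := B) fun g hg => by simpa using hg]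
    refine sum_congr rfl fun w hw => congrArg card ?_
    rw [filter_filter]
    exact filter_congr fun g _ => ⟨And.right, fun h => ⟨h ▸ hw, h⟩⟩
  rw [hfib, sum_congr rfl fun w hw => card_filter_smul_eq_eq_card_stabilizer (hB hw), sum_const,
    smul_eq_mul, mul_assoc, ← index_stabilizer, Subgroup.card_mul_index, Nat.card_eq_fintype_card]

theorem MulAction.exists_forall_smul_notMem_of_card_mul_card_lt {S B : Finset α} {T : Set α}
    (hS : ∀ x ∈ S, orbit G x = T) (hB : ↑B ⊆ T) (hcard : #S * #B < T.ncard) :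
    ∃ g : G, ∀ x ∈ S, g • x ∉ B := by
  have hcount : (∑ g : G, #{x ∈ S | g • x ∈ B}) * T.ncard = #S * #B * Fintype.card G := by
    have hswap : ∑ g : G, #{x ∈ S | g • x ∈ B} = ∑ x ∈ S, #{g : G | g • x ∈ B} := by
      simp only [card_filter]; exact sum_comm
    rw [hswap, sum_mul, sum_congr rfl fun x hx => hS x hx ▸
      card_filter_smul_mem_mul_ncard_orbit (hS x hx ▸ hB), sum_const, smul_eq_mul, mul_assoc]
  have hsum : ∑ g : G, #{x ∈ S | g • x ∈ B} < ∑ _g : G, 1 := by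
    rw [sum_const, card_univ, smul_eq_mul, mul_one,
      ← Nat.mul_lt_mul_right (a := T.ncard) (by omega), hcount, mul_comm (Fintype.card G)]
    exact Nat.mul_lt_mul_of_pos_right hcard Fintype.card_pos
  obtain ⟨g, -, hg⟩ := exists_lt_of_sum_lt hsum
  refine ⟨g, fun x hx hgx => ?_⟩
  simp only [Nat.lt_one_iff, card_eq_zero, filter_eq_empty_iff] at hg
  exact hg hx hgx

end Averaging

section LinearAlgebra

variable {K V : Type*} [DivisionRing K] [AddCommGroup V] [Module K V]

theorem LinearEquiv.exists_apply_eq_of_ne_zero {x w : V} (hx : x ≠ 0) (hw : w ≠ 0) :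
    ∃ g : V ≃ₗ[K] V, g x = w := by
  let f := (LinearEquiv.toSpanNonzeroSingleton K V x hx).symm ≪≫ₗ
    LinearEquiv.toSpanNonzeroSingleton K V w hw
  obtain ⟨g, hg⟩ := Submodule.exists_linearEquiv_restrict_eq f
  refine ⟨g, ?_⟩
  have hfx := hg (LinearEquiv.toSpanNonzeroSingleton K V x hx 1)
  rw [LinearEquiv.trans_apply, LinearEquiv.symm_apply_apply, toSpanNonzeroSingleton_one,
    toSpanNonzeroSingleton_one] at hfx
  exact hfx.symm

theorem LinearEquiv.orbit_eq_compl_zero {x : V} (hx : x ≠ 0) :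
    orbit (V ≃ₗ[K] V) x = {0}ᶜ := by
  ext w
  refine ⟨?_, fun hw => ?_⟩
  · rintro ⟨g, rfl⟩
    simpa [LinearEquiv.smul_def] using hx
  · obtain ⟨g, hg⟩ := exists_apply_eq_of_ne_zero (K := K) hx hw
    exact ⟨g, hg⟩

theorem Submodule.exists_finrank_eq [FiniteDimensional K V] {m : ℕ}
    (hm : m ≤ Module.finrank K V) :
    ∃ W : Submodule K V, Module.finrank K W = m := by
  let b := Module.finBasis K V
  refine ⟨span K (Set.range (b ∘ Fin.castLE hm)), ?_⟩
  rw [finrank_span_eq_card (b.linearIndependent.comp _ (Fin.castLE_injective hm)), Fintype.card_fin]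

theorem Submodule.card_filter_mem_ne_zero [Fintype K] [Fintype V] [DecidableEq V]
    (W : Submodule K V) :
    #{v | v ∈ W ∧ v ≠ 0} = Fintype.card K ^ Module.finrank K W - 1 := by
  rw [← filter_filter, filter_ne', card_erase_of_mem (by simp), ← Module.card_eq_pow_finrank,
    Fintype.card_subtype]

end LinearAlgebra

theorem Nat.sub_one_mul_lt_of_mul_le {q b N : ℕ} (hN : 0 < N) (h : q * b ≤ N) :
    (q - 1) * b < N := by
  rcases Nat.eq_zero_or_pos b with rfl | hb
  · omega
  · rw [Nat.sub_one_mul]; omega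

theorem punctured_subspace_in_dense_set_general {n m : ℕ} (hn : m + 3 ≤ n)
    (Y : Finset (Fin n → ZMod 2))
    (hY : ((Finset.univ.filter (fun v : Fin n → ZMod 2 => v ≠ 0)) \ Y).card ≤
      ((2 : ℝ) ^ m)⁻¹ * ((2 : ℝ) ^ n - 1)) :
    ∃ V : Submodule (ZMod 2) (Fin n → ZMod 2),
      Module.finrank (ZMod 2) V = m ∧
      ∀ v ∈ V, v ≠ (0 : Fin n → ZMod 2) → v ∈ Y := by
  set B := (Finset.univ.filter (fun v : Fin n → ZMod 2 => v ≠ 0)) \ Y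
  obtain ⟨W, hW⟩ := Submodule.exists_finrank_eq (K := ZMod 2) (V := Fin n → ZMod 2) (m := m)
    (by rw [Module.finrank_fin_fun]; omega)
  have hBcard : 2 ^ m * #B ≤ 2 ^ n - 1 := by
    rw [le_inv_mul_iff₀ (by positivity)] at hY
    exact_mod_cast (show ((2 ^ m * #B : ℕ) : ℝ) ≤ ((2 ^ n - 1 : ℕ) : ℝ) by
      push_cast [Nat.cast_sub Nat.one_le_two_pow]; exact hY)
  have hcard : #{v | v ∈ W ∧ v ≠ 0} * #B < ({0}ᶜ : Set (Fin n → ZMod 2)).ncard := by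
    rw [W.card_filter_mem_ne_zero, hW, Set.ncard_compl, Set.ncard_singleton, ZMod.card]
    simpa using Nat.sub_one_mul_lt_of_mul_le (Nat.sub_pos_of_lt (Nat.one_lt_two_pow (by omega)))
      hBcard
  have := Fintype.ofInjective (fun g : (Fin n → ZMod 2) ≃ₗ[ZMod 2] (Fin n → ZMod 2) => ⇑g)
    DFunLike.coe_injective
  obtain ⟨g, hg⟩ := exists_forall_smul_notMem_of_card_mul_card_lt
    (G := (Fin n → ZMod 2) ≃ₗ[ZMod 2] (Fin n → ZMod 2))
    (fun x hx => LinearEquiv.orbit_eq_compl_zero (mem_filter.mp hx).2.2)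
    (fun v hv => (mem_filter.mp (mem_sdiff.mp hv).1).2) hcard
  refine ⟨W.map (g : (Fin n → ZMod 2) →ₗ[ZMod 2] (Fin n → ZMod 2)),
    by rw [LinearEquiv.finrank_map_eq, hW], ?_⟩
  rintro _ ⟨x, hx, rfl⟩ hx0
  by_contra hxY
  exact hg x (mem_filter.mpr ⟨mem_univ _, hx, fun h => hx0 (by rw [h, map_zero])⟩)
    (mem_sdiff.mpr ⟨mem_filter.mpr ⟨mem_univ _, hx0⟩, hxY⟩)

/-- if `Y` contains all but a `2^{-m}`-fraction of the nonzero
vectors of `𝔽₂ⁿ` (with `n ≥ m + 3`, `m ≥ 1`), then some `m`-dimensional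
subspace has all of its nonzero vectors inside `Y`. -/
theorem punctured_subspace_in_dense_set {n m : ℕ} (hm : 1 ≤ m) (hn : m + 3 ≤ n)
    (Y : Finset (Fin n → ZMod 2)) (hY0 : ∀ y ∈ Y, y ≠ (0 : Fin n → ZMod 2))
    (hY : ((Finset.univ.filter (fun v : Fin n → ZMod 2 => v ≠ 0)) \ Y).card ≤
      ((2 : ℝ) ^ m)⁻¹ * ((2 : ℝ) ^ n - 1)) :
    ∃ V : Submodule (ZMod 2) (Fin n → ZMod 2),
      Module.finrank (ZMod 2) V = m ∧
      ∀ v ∈ V, v ≠ (0 : Fin n → ZMod 2) → v ∈ Y :=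
  punctured_subspace_in_dense_set_general hn Y hY
end

section
/- Let A ⊆ 𝔽₂ⁿ, W ≤ 𝔽₂ⁿ a subspace, d ≥ 1, ε > 0, and let x₁,…,x_d ∈ 𝔽₂ⁿ have linearly independent images mod W. Suppose that for every nonempty I ⊆ [d], the set A is ε-uniform on the coset (∑_{i∈I} x_i) + W, i.e., |(1_A μ_{∑_{i∈I} x_i + W})^∧(r)| ≤ ε for all r ∉ W^⊥. Set V = W + ⟨x₁,…,x_d⟩. Then for every r ∉ W^⊥, |(1_A μ_V)^∧(r)| ≤ 2^{-d} + ε. -/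
/-!
Linear independence of the `xᵢ` modulo `W` makes `(c, w) ↦ ∑ cᵢ xᵢ + w` a bijection
`𝔽₂ᵈ × W → V`, so `(1_A μ_V)^∧(r)` is the average over `c ∈ 𝔽₂ᵈ` of the coefficients
`(1_A μ_{∑ cᵢ xᵢ + W})^∧(r)`. The term `c = 0` has modulus at most `1`, and every other term,
the coset of `∑_{i ∈ I} xᵢ` with `I = {i | cᵢ ≠ 0} ≠ ∅`, has modulus at most `ε`.
-/

open scoped Classical
open Finset
noncomputable section

/-- Dot product on `𝔽₂ⁿ`. -/
def dot2 {n : ℕ} (r x : Fin n → ZMod 2) : ZMod 2 := ∑ i, r i * x i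

/-- The additive character `t ↦ (-1)^t` of `𝔽₂`. -/
def chi2 (t : ZMod 2) : ℂ := (-1 : ℂ) ^ t.val

/-- `(1_A μ_{x+W})^∧(r) = |W|⁻¹ ∑_{w ∈ W} 1_A(x+w) (-1)^{r·(x+w)}`. -/
def fcoset2 {n : ℕ} (A : Set (Fin n → ZMod 2)) (x : Fin n → ZMod 2)
    (W : Submodule (ZMod 2) (Fin n → ZMod 2)) (r : Fin n → ZMod 2) : ℂ :=
  (∑ w : W, if x + (w : Fin n → ZMod 2) ∈ A then
      chi2 (dot2 r (x + (w : Fin n → ZMod 2))) else 0) / (Fintype.card W)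

/-- The density `𝔼_{x+W} 1_A` of `A` on the coset `x + W`. -/
def dens2 {n : ℕ} (A : Set (Fin n → ZMod 2)) (x : Fin n → ZMod 2)
    (W : Submodule (ZMod 2) (Fin n → ZMod 2)) : ℝ :=
  (∑ w : W, if x + (w : Fin n → ZMod 2) ∈ A then (1 : ℝ) else 0) / (Fintype.card W)

section SupSpan

variable {K M ι : Type*} [Ring K] [AddCommGroup M] [Module K M] [Fintype ι]
  {W : Submodule K M} {x : ι → M}

def sumSmulAddSubmodule (W : Submodule K M) (x : ι → M) : (ι → K) × W →ₗ[K] M :=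
  (Fintype.linearCombination K x).coprod W.subtype

lemma sumSmulAddSubmodule_apply (p : (ι → K) × W) :
    sumSmulAddSubmodule W x p = ∑ i, p.1 i • x i + p.2 := by
  simp [sumSmulAddSubmodule, Fintype.linearCombination_apply]

lemma range_sumSmulAddSubmodule :
    LinearMap.range (sumSmulAddSubmodule W x) = W ⊔ Submodule.span K (Set.range x) := by
  rw [sumSmulAddSubmodule, LinearMap.range_coprod, Fintype.range_linearCombination,
    Submodule.range_subtype, sup_comm]

lemma injective_sumSmulAddSubmodule (hx : LinearIndependent K (W.mkQ ∘ x)) :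
    Function.Injective (sumSmulAddSubmodule W x) := by
  rw [← LinearMap.ker_eq_bot, LinearMap.ker_eq_bot']
  rintro ⟨c, w⟩ hcw
  rw [sumSmulAddSubmodule_apply] at hcw
  have hc : c = 0 := by
    have hmk : ∑ i, c i • W.mkQ (x i) = 0 := by
      simpa only [map_add, map_sum, map_smul, (Submodule.Quotient.mk_eq_zero W).2 w.2,
        Submodule.mkQ_apply, add_zero, map_zero] using congrArg W.mkQ hcw
    funext i
    exact Fintype.linearIndependent_iff.1 hx c hmk i
  subst hc
  simpa using hcw

def sumSmulAddEquiv (hx : LinearIndependent K (W.mkQ ∘ x)) :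
    ((ι → K) × W) ≃ₗ[K] ↥(W ⊔ Submodule.span K (Set.range x)) :=
  (LinearEquiv.ofInjective _ (injective_sumSmulAddSubmodule hx)).trans
    (LinearEquiv.ofEq _ _ range_sumSmulAddSubmodule)

lemma sum_sup_span_eq_sum_sum [DecidableEq ι] [Fintype K] [Fintype W]
    [Fintype ↥(W ⊔ Submodule.span K (Set.range x))] {β : Type*} [AddCommMonoid β] (hx : LinearIndependent K (W.mkQ ∘ x))
    (f : M → β) :
    ∑ v : ↥(W ⊔ Submodule.span K (Set.range x)), f v
      = ∑ c : ι → K, ∑ w : W, f (∑ i, c i • x i + w) := by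
  rw [← Fintype.sum_prod_type']
  refine (Fintype.sum_equiv (sumSmulAddEquiv hx).toEquiv _ _ fun p => ?_).symm
  simp [sumSmulAddEquiv, sumSmulAddSubmodule_apply]

lemma card_sup_span [DecidableEq ι] [Fintype K] [Fintype W]
    [Fintype ↥(W ⊔ Submodule.span K (Set.range x))] (hx : LinearIndependent K (W.mkQ ∘ x)) :
    Fintype.card ↥(W ⊔ Submodule.span K (Set.range x))
      = Fintype.card (ι → K) * Fintype.card W := by
  rw [Fintype.card_eq_sum_ones, sum_sup_span_eq_sum_sum hx fun _ => 1]
  simp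

end SupSpan

lemma norm_chi2 (t : ZMod 2) : ‖chi2 t‖ = 1 := by
  simp [chi2]

lemma norm_fcoset2_le_one {n : ℕ} (A : Set (Fin n → ZMod 2)) (y : Fin n → ZMod 2)
    (W : Submodule (ZMod 2) (Fin n → ZMod 2)) (r : Fin n → ZMod 2) :
    ‖fcoset2 A y W r‖ ≤ 1 := by
  have hcard : (0 : ℝ) < Fintype.card W := by exact_mod_cast Fintype.card_pos
  rw [fcoset2, norm_div, Complex.norm_natCast, div_le_one hcard]
  calc _ ≤ ∑ w : W, ‖if y + (w : Fin n → ZMod 2) ∈ A then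
          chi2 (dot2 r (y + (w : Fin n → ZMod 2))) else 0‖ := norm_sum_le _ _
    _ ≤ ∑ _w : W, (1 : ℝ) := by
        refine Finset.sum_le_sum fun w _ => ?_
        split_ifs <;> simp [norm_chi2]
    _ = Fintype.card W := by simp

lemma fcoset2_sup_span {n d : ℕ} (A : Set (Fin n → ZMod 2))
    {W : Submodule (ZMod 2) (Fin n → ZMod 2)} {x : Fin d → (Fin n → ZMod 2)}
    (hx : LinearIndependent (ZMod 2) (W.mkQ ∘ x)) (r : Fin n → ZMod 2) :
    fcoset2 A 0 (W ⊔ Submodule.span (ZMod 2) (Set.range x)) r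
      = (∑ c : Fin d → ZMod 2, fcoset2 A (∑ i, c i • x i) W r)
          / Fintype.card (Fin d → ZMod 2) := by
  simp only [fcoset2, zero_add]
  rw [sum_sup_span_eq_sum_sum hx fun v => if v ∈ A then chi2 (dot2 r v) else 0,
    card_sup_span hx, ← Finset.sum_div, div_div, Nat.cast_mul, mul_comm]

lemma sum_smul_eq_sum_filter_ne_zero {ι M : Type*} [Fintype ι] [AddCommGroup M]
    [Module (ZMod 2) M] (c : ι → ZMod 2) (x : ι → M) :
    ∑ i, c i • x i = ∑ i with c i ≠ 0, x i := by
  rw [Finset.sum_filter]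
  refine Finset.sum_congr rfl fun i _ => ?_
  obtain h | h := (by decide : ∀ t : ZMod 2, t = 0 ∨ t = 1) (c i)
  all_goals simp [h]

lemma norm_average_le {𝕜 α : Type*} [RCLike 𝕜] [Fintype α] (z : α → 𝕜) (a : α) {ε : ℝ}
    (hε : 0 ≤ ε) (ha : ‖z a‖ ≤ 1) (hz : ∀ b ≠ a, ‖z b‖ ≤ ε) :
    ‖(∑ b, z b) / Fintype.card α‖ ≤ (Fintype.card α : ℝ)⁻¹ + ε := by
  have hN : (0 : ℝ) < Fintype.card α := by
    exact_mod_cast Fintype.card_pos_iff.2 ⟨a⟩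
  rw [norm_div, RCLike.norm_natCast, div_le_iff₀ hN, add_mul, inv_mul_cancel₀ hN.ne']
  have hrest : ∑ b ∈ Finset.univ.erase a, ‖z b‖ ≤ (Fintype.card α - 1) * ε := by
    calc _ ≤ ∑ _b ∈ Finset.univ.erase a, ε :=
          Finset.sum_le_sum fun b hb => hz b (Finset.ne_of_mem_erase hb)
      _ = (Fintype.card α - 1) * ε := by
          rw [Finset.sum_const, Finset.card_erase_of_mem (Finset.mem_univ a), nsmul_eq_mul,
            Finset.card_univ, Nat.cast_pred (Fintype.card_pos_iff.2 ⟨a⟩)]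
  calc ‖∑ b, z b‖ ≤ ∑ b, ‖z b‖ := norm_sum_le _ _
    _ = ‖z a‖ + ∑ b ∈ Finset.univ.erase a, ‖z b‖ :=
        (Finset.add_sum_erase _ _ (Finset.mem_univ a)).symm
    _ ≤ 1 + ε * Fintype.card α := by linarith

theorem uniformity_outside_W_perp_general {n d : ℕ}
    (A : Set (Fin n → ZMod 2)) (W : Submodule (ZMod 2) (Fin n → ZMod 2))
    (ε : ℝ) (hε : 0 < ε)
    (x : Fin d → (Fin n → ZMod 2))
    (hx : LinearIndependent (ZMod 2) fun i => Submodule.Quotient.mk (p := W) (x i))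
    (hunif : ∀ I : Finset (Fin d), I.Nonempty →
      ∀ r : Fin n → ZMod 2, (∃ w ∈ W, dot2 r w ≠ 0) →
        ‖fcoset2 A (∑ i ∈ I, x i) W r‖ ≤ ε)
    (V : Submodule (ZMod 2) (Fin n → ZMod 2))
    (hV : V = W ⊔ Submodule.span (ZMod 2) (Set.range x)) :
    ∀ r : Fin n → ZMod 2, (∃ w ∈ W, dot2 r w ≠ 0) →
      ‖fcoset2 A 0 V r‖ ≤ ((2 : ℝ) ^ d)⁻¹ + ε := by
  intro r hr
  subst hV
  have hcard : (Fintype.card (Fin d → ZMod 2) : ℝ) = 2 ^ d := by simp [ZMod.card]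
  rw [fcoset2_sup_span A hx r, ← hcard]
  refine norm_average_le _ 0 hε.le (by simpa using norm_fcoset2_le_one A 0 W r) fun c hc => ?_
  rw [sum_smul_eq_sum_filter_ne_zero]
  exact hunif _ (Finset.filter_nonempty_iff.2 (by simpa [funext_iff] using hc)) r hr

/-- if `A` is `ε`-uniform on every coset `(∑_{i∈I} xᵢ) + W` with
`I ≠ ∅`, then for `V = W + ⟨x₁,…,x_d⟩` and every `r ∉ W^⊥` we have
`|(1_A μ_V)^∧(r)| ≤ 2^{-d} + ε`. -/
theorem uniformity_outside_W_perp {n d : ℕ} (hd : 1 ≤ d)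
    (A : Set (Fin n → ZMod 2)) (W : Submodule (ZMod 2) (Fin n → ZMod 2))
    (ε : ℝ) (hε : 0 < ε)
    (x : Fin d → (Fin n → ZMod 2))
    (hx : LinearIndependent (ZMod 2) fun i => Submodule.Quotient.mk (p := W) (x i))
    (hunif : ∀ I : Finset (Fin d), I.Nonempty →
      ∀ r : Fin n → ZMod 2, (∃ w ∈ W, dot2 r w ≠ 0) →
        ‖fcoset2 A (∑ i ∈ I, x i) W r‖ ≤ ε)
    (V : Submodule (ZMod 2) (Fin n → ZMod 2))
    (hV : V = W ⊔ Submodule.span (ZMod 2) (Set.range x)) :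
    ∀ r : Fin n → ZMod 2, (∃ w ∈ W, dot2 r w ≠ 0) →
      ‖fcoset2 A 0 V r‖ ≤ ((2 : ℝ) ^ d)⁻¹ + ε :=
  uniformity_outside_W_perp_general A W ε hε x hx hunif V hV
end
end
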